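/- Let k ≥ 2 and 1 ≤ i ≤ k be integers, let r, s be positive integers, and let n ≥ -1 be an integer. Then the matrix product A_k · Q_k^{n+1} equals the k×k integer matrix whose (t, j) entry (rows and columns indexed 1, …, k) is F^i_{r,s}(k, n + 2k - t - j). -/
import Mathlib


/-- Auxiliary sequence: `genFibAux i k r s m` equals `F^i_{r,s}(k, m-1)`, i.e. the
four-parameters sequence indexed by `m = n + 1 ≥ 0`.  For `i ≤ k` the initial values
(`-1 ≤ n ≤ k-2`, i.e. `m < k`) are `r^⌊(n+1)/i⌋`, for `k < i` (`m < i`) they are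
`s^⌊(n+1)/k⌋`, and for `n ≥ max{k,i} - 1` the recurrence
`F(n) = r·F(n-i) + s·F(n-k)` holds. -/
def genFibAux (i k r s : ℕ) : ℕ → ℤ
  | m =>
    if m < max (max k i) 1 then
      if i ≤ k then (r : ℤ) ^ (m / i) else (s : ℤ) ^ (m / k)
    else
      r * genFibAux i k r s (m - max i 1) + s * genFibAux i k r s (m - max k 1)
  termination_by m => m
  decreasing_by all_goals omega

/-- The four-parameters sequence `F^i_{r,s}(k,n)` for integer `n ≥ -1`, with the
convention that it vanishes for `n ≤ -2`. -/
def genFib (i k r s : ℕ) (n : ℤ) : ℤ :=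
  if n < -1 then 0 else genFibAux i k r s (n + 1).toNat

/-- The matrix `Q_k` (rows/columns indexed by `Fin k`, corresponding to the
1-indexed rows/columns `1, …, k`): entry `1` at `(t, t+1)`; the first column has
entry `r` in row `i` and entry `s` in row `k` when `i < k`, and entry `r + s` in
row `k` when `i = k`; all other entries vanish. -/
def Qmat (i k r s : ℕ) : Matrix (Fin k) (Fin k) ℤ :=
  Matrix.of fun t j =>
    if (j : ℕ) = (t : ℕ) + 1 then 1
    else if (j : ℕ) = 0 then
      if i = k then (if (t : ℕ) = k - 1 then (r : ℤ) + s else 0)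
      else if (t : ℕ) = i - 1 then (r : ℤ)
      else if (t : ℕ) = k - 1 then (s : ℤ)
      else 0
    else 0

/-- The matrix `A_k` of initial conditions: its `(t, j)` entry (1-indexed) is
`F^i_{r,s}(k, 2k-1-t-j)`. -/
def Amat (i k r s : ℕ) : Matrix (Fin k) (Fin k) ℤ :=
  Matrix.of fun t j =>
    genFib i k r s (2 * (k : ℤ) - 3 - ((t : ℕ) : ℤ) - ((j : ℕ) : ℤ))

lemma genFib_rec (i k r s : ℕ) (hi : 1 ≤ i) (hik : i ≤ k) (N : ℤ) (hN : (k:ℤ) - 1 ≤ N) :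
    genFib i k r s N = r * genFib i k r s (N - i) + s * genFib i k r s (N - k) := by
  have hk1 : 1 ≤ k := le_trans hi hik
  unfold genFib
  rw [if_neg (by omega), if_neg (by omega), if_neg (by omega)]
  rw [genFibAux]
  have hmax : max (max k i) 1 = k := by omega
  have hi' : max i 1 = i := by omega
  have hk' : max k 1 = k := by omega
  rw [hmax, hi', hk', if_neg (by omega)]
  have e1 : (N + 1).toNat - i = (N - i + 1).toNat := by omega
  have e2 : (N + 1).toNat - k = (N - k + 1).toNat := by omega
  rw [e1, e2]

lemma sum_ite_val {k : ℕ} (f : Fin k → ℤ) (c : ℕ) (hc : c < k) :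
    (∑ p : Fin k, if (p : ℕ) = c then f p else 0) = f ⟨c, hc⟩ := by
  rw [Finset.sum_eq_single ⟨c, hc⟩]
  · simp
  · intro b _ hb
    rw [if_neg]
    intro h; exact hb (Fin.ext h)
  · simp

lemma Qmat_col_zero (i k r s : ℕ) (hi : 1 ≤ i) (hik : i ≤ k) (p j : Fin k)
    (hj : (j : ℕ) = 0) :
    Qmat i k r s p j =
      (if (p : ℕ) = i - 1 then (r : ℤ) else 0) +
      (if (p : ℕ) = k - 1 then (s : ℤ) else 0) := by
  simp only [Qmat, Matrix.of_apply, hj]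
  rw [if_neg (by omega)]
  split_ifs <;> omega

lemma Qmat_col_pos (i k r s : ℕ) (p j : Fin k) (hj : (j : ℕ) ≠ 0) :
    Qmat i k r s p j = if (p : ℕ) = (j : ℕ) - 1 then 1 else 0 := by
  simp only [Qmat, Matrix.of_apply]
  split_ifs <;> omega

lemma key (i k r s : ℕ) (hk : 2 ≤ k) (hi : 1 ≤ i) (hik : i ≤ k) (m : ℕ) :
    Amat i k r s * (Qmat i k r s) ^ m =
      Matrix.of (fun t j : Fin k =>
        genFib i k r s ((m : ℤ) + 2 * (k : ℤ) - 3 - ((t : ℕ) : ℤ) - ((j : ℕ) : ℤ))) := by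
  induction m with
  | zero =>
    rw [pow_zero, mul_one]
    ext t j
    simp only [Amat, Matrix.of_apply]
    congr 1
    push_cast
    ring
  | succ m ih =>
    rw [pow_succ, ← mul_assoc, ih]
    ext t j
    rw [Matrix.mul_apply]
    simp only [Matrix.of_apply]
    by_cases hj : (j : ℕ) = 0
    · have hjz : ((j : ℕ) : ℤ) = 0 := by exact_mod_cast hj
      simp only [Qmat_col_zero i k r s hi hik _ j hj, mul_add, mul_ite, mul_zero]
      rw [Finset.sum_add_distrib,
        sum_ite_val (fun p => genFib i k r s ((m:ℤ) + 2*k - 3 - t - p) * r) (i-1) (by omega),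
        sum_ite_val (fun p => genFib i k r s ((m:ℤ) + 2*k - 3 - t - p) * s) (k-1) (by omega)]
      have hN : ((k:ℤ)) - 1 ≤ (m:ℤ) + 2*k - 2 - (t:ℕ) := by
        have := t.isLt; omega
      rw [show ((m:ℕ)+1 : ℕ) + 2*(k:ℤ) - 3 - ((t:ℕ):ℤ) - ((j:ℕ):ℤ)
          = (m:ℤ) + 2*k - 2 - (t:ℕ) by push_cast [hjz]; ring]
      rw [genFib_rec i k r s hi hik _ hN]
      have e1 : (m:ℤ) + 2*k - 2 - (t:ℕ) - (i:ℤ) = (m:ℤ) + 2*k - 3 - (t:ℕ) - ((i-1 : ℕ) : ℤ) := by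
        omega
      have e2 : (m:ℤ) + 2*k - 2 - (t:ℕ) - (k:ℤ) = (m:ℤ) + 2*k - 3 - (t:ℕ) - ((k-1 : ℕ) : ℤ) := by
        omega
      rw [e1, e2]
      ring
    · simp only [Qmat_col_pos i k r s _ j hj, mul_ite, mul_one, mul_zero]
      rw [sum_ite_val (fun p => genFib i k r s ((m:ℤ) + 2*k - 3 - t - p)) ((j:ℕ)-1)
        (by have := j.isLt; omega)]
      congr 1
      push_cast
      omega

/-- For integers `k ≥ 2`, `1 ≤ i ≤ k`, positive integers `r, s`,
and integer `n ≥ -1`, the product `A_k · Q_k^{n+1}` is the `k×k` matrix whose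
`(t, j)` entry (1-indexed) is `F^i_{r,s}(k, n + 2k - t - j)`. -/
theorem Amat_mul_Qmat_pow (i k r s : ℕ) (hk : 2 ≤ k) (hi : 1 ≤ i) (hik : i ≤ k)
    (hr : 0 < r) (hs : 0 < s) (n : ℤ) (hn : -1 ≤ n) :
    Amat i k r s * (Qmat i k r s) ^ (n + 1).toNat =
      Matrix.of (fun t j : Fin k =>
        genFib i k r s (n + 2 * (k : ℤ) - 2 - ((t : ℕ) : ℤ) - ((j : ℕ) : ℤ))) := by
  rw [key i k r s hk hi hik]
  ext t j
  simp only [Matrix.of_apply]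
  congr 1
  omega
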